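/- arXiv:2603.28973 — 6 statements merged into one kernel-verified Lean document; each statement's English description precedes it below -/
import Mathlib

section
/- Fine's theorem (one direction): if there exists a joint probability distribution on {-1,+1}^4 for (A, A', B, B') whose bivariate marginals reproduce the observed correlations E[AB], E[AB'], E[A'B], E[A'B'], then all eight CHSH inequalities hold, i.e., |±E[AB] ± E[AB'] ± E[A'B] ∓ E[A'B']| ≤ 2 for each sign pattern with an odd number of minus signs. -/
/-- The sign ±1 associated to a Boolean. -/
def sgn (x : Bool) : ℝ := if x then 1 else -1

/-- Fine's theorem (easy direction): if a joint distribution on {-1,+1}⁴ for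
    (A, A', B, B') reproduces the correlations, then all eight CHSH inequalities hold. -/
theorem stmt_5 (p : Bool × Bool × Bool × Bool → ℝ)
    (hp : ∀ v, 0 ≤ p v) (hsum : ∑ v : Bool × Bool × Bool × Bool, p v = 1)
    (c00 c01 c10 c11 : ℝ)
    (h00 : c00 = ∑ v : Bool × Bool × Bool × Bool, p v * sgn v.1 * sgn v.2.2.1)
    (h01 : c01 = ∑ v : Bool × Bool × Bool × Bool, p v * sgn v.1 * sgn v.2.2.2)
    (h10 : c10 = ∑ v : Bool × Bool × Bool × Bool, p v * sgn v.2.1 * sgn v.2.2.1)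
    (h11 : c11 = ∑ v : Bool × Bool × Bool × Bool, p v * sgn v.2.1 * sgn v.2.2.2) :
    |c00 + c01 + c10 - c11| ≤ 2 ∧ |c00 + c01 - c10 + c11| ≤ 2 ∧
    |c00 - c01 + c10 + c11| ≤ 2 ∧ |-c00 + c01 + c10 + c11| ≤ 2 := by
  simp only [Fintype.sum_prod_type, Fintype.sum_bool, sgn] at hsum h00 h01 h10 h11
  norm_num at h00 h01 h10 h11
  have P := fun a b c d => hp (a, b, c, d)
  refine ⟨?_, ?_, ?_, ?_⟩ <;> rw [abs_le] <;> constructor <;>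
    linarith [P true true true true, P true true true false, P true true false true,
      P true true false false, P true false true true, P true false true false,
      P true false false true, P true false false false, P false true true true,
      P false true true false, P false true false true, P false true false false,
      P false false true true, P false false true false, P false false false true,
      P false false false false]
end

section
/- Fine's theorem (converse direction, correlation form): given four numbers c₀₀, c₀₁, c₁₀, c₁₁ ∈ [-1,1], if all eight CHSH inequalities |±c₀₀ ± c₀₁ ± c₁₀ ∓ c₁₁| ≤ 2 (one minus sign in each) hold, then there exists a probability distribution on {-1,+1}^4 whose pairwise correlations between the first two and last two coordinates equal c₀₀, c₀₁, c₁₀, c₁₁ respectively. -/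
set_option maxHeartbeats 2000000
set_option linter.unnecessarySeqFocus false

/-- Correction term for Fine's construction. -/
noncomputable def Gfun (c00 c01 c10 c11 t1 t2 : ℝ) : ℝ :=
  ((1+t1)*(1+t2)*(|c00+c01+c10+c11| - 1 + (4 - |c00+c01+c10+c11| - |c00+c01-c10-c11| - |c00-c01+c10-c11| - |c00-c01-c10+c11|)/4)
  + (1+t1)*(1-t2)*(|c00+c01-c10-c11| - 1 + (4 - |c00+c01+c10+c11| - |c00+c01-c10-c11| - |c00-c01+c10-c11| - |c00-c01-c10+c11|)/4)
  + (1-t1)*(1+t2)*(|c00-c01+c10-c11| - 1 + (4 - |c00+c01+c10+c11| - |c00+c01-c10-c11| - |c00-c01+c10-c11| - |c00-c01-c10+c11|)/4)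
  + (1-t1)*(1-t2)*(|c00-c01-c10+c11| - 1 + (4 - |c00+c01+c10+c11| - |c00+c01-c10-c11| - |c00-c01+c10-c11| - |c00-c01-c10+c11|)/4))/4

/-- The explicit joint distribution. -/
noncomputable def pfun (c00 c01 c10 c11 : ℝ) (v : Bool × Bool × Bool × Bool) : ℝ :=
  (1/16) * (1 + (sgn v.1 * sgn v.2.2.1)*c00 + (sgn v.1 * sgn v.2.2.2)*c01
    + (sgn v.2.1 * sgn v.2.2.1)*c10 + (sgn v.2.1 * sgn v.2.2.2)*c11
    + Gfun c00 c01 c10 c11 ((sgn v.1 * sgn v.2.2.1)*(sgn v.1 * sgn v.2.2.2))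
        ((sgn v.1 * sgn v.2.2.1)*(sgn v.2.1 * sgn v.2.2.1)))

/-- Fine's theorem (converse direction, correlation form): if c₀₀, c₀₁, c₁₀, c₁₁ ∈ [-1,1]
    satisfy all eight CHSH inequalities, then there is a joint distribution on {-1,+1}⁴
    realizing them as pairwise correlations. -/
theorem stmt_6 (c00 c01 c10 c11 : ℝ)
    (h00 : |c00| ≤ 1) (h01 : |c01| ≤ 1) (h10 : |c10| ≤ 1) (h11 : |c11| ≤ 1)
    (hchsh1 : |c00 + c01 + c10 - c11| ≤ 2) (hchsh2 : |c00 + c01 - c10 + c11| ≤ 2)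
    (hchsh3 : |c00 - c01 + c10 + c11| ≤ 2) (hchsh4 : |-c00 + c01 + c10 + c11| ≤ 2) :
    ∃ p : Bool × Bool × Bool × Bool → ℝ,
      (∀ v, 0 ≤ p v) ∧ (∑ v : Bool × Bool × Bool × Bool, p v = 1) ∧
      c00 = (∑ v : Bool × Bool × Bool × Bool, p v * sgn v.1 * sgn v.2.2.1) ∧
      c01 = (∑ v : Bool × Bool × Bool × Bool, p v * sgn v.1 * sgn v.2.2.2) ∧
      c10 = (∑ v : Bool × Bool × Bool × Bool, p v * sgn v.2.1 * sgn v.2.2.1) ∧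
      c11 = (∑ v : Bool × Bool × Bool × Bool, p v * sgn v.2.1 * sgn v.2.2.2) := by
  obtain ⟨H1a, H1b⟩ := abs_le.mp hchsh1
  obtain ⟨H2a, H2b⟩ := abs_le.mp hchsh2
  obtain ⟨H3a, H3b⟩ := abs_le.mp hchsh3
  obtain ⟨H4a, H4b⟩ := abs_le.mp hchsh4
  obtain ⟨B1a, B1b⟩ := abs_le.mp h00
  obtain ⟨B2a, B2b⟩ := abs_le.mp h01
  obtain ⟨B3a, B3b⟩ := abs_le.mp h10
  obtain ⟨B4a, B4b⟩ := abs_le.mp h11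
  have hT : |c00+c01+c10+c11| + |c00+c01-c10-c11| + |c00-c01+c10-c11| + |c00-c01-c10+c11| ≤ 4 := by
    rcases abs_cases (c00+c01+c10+c11) with ⟨e1,_⟩|⟨e1,_⟩ <;>
    rcases abs_cases (c00+c01-c10-c11) with ⟨e2,_⟩|⟨e2,_⟩ <;>
    rcases abs_cases (c00-c01+c10-c11) with ⟨e3,_⟩|⟨e3,_⟩ <;>
    rcases abs_cases (c00-c01-c10+c11) with ⟨e4,_⟩|⟨e4,_⟩ <;>
    rw [e1, e2, e3, e4] <;> linarith
  have hL1a := neg_abs_le (c00+c01+c10+c11)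
  have hL1b := le_abs_self (c00+c01+c10+c11)
  have hL2a := neg_abs_le (c00+c01-c10-c11)
  have hL2b := le_abs_self (c00+c01-c10-c11)
  have hL3a := neg_abs_le (c00-c01+c10-c11)
  have hL3b := le_abs_self (c00-c01+c10-c11)
  have hL4a := neg_abs_le (c00-c01-c10+c11)
  have hL4b := le_abs_self (c00-c01-c10+c11)
  refine ⟨pfun c00 c01 c10 c11, ?_, ?_, ?_, ?_, ?_, ?_⟩
  · rintro ⟨x1, x2, x3, x4⟩
    cases x1 <;> cases x2 <;> cases x3 <;> cases x4 <;>
      simp only [pfun, Gfun, sgn, if_true, if_false] <;> norm_num <;> linarith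
  all_goals
    simp only [Fintype.sum_prod_type, Fintype.sum_bool, pfun, Gfun, sgn, if_true, if_false] <;>
    norm_num <;> ring_nf
end

section
/- Tsirelson's bound: let A, A' be self-adjoint operators on a finite-dimensional Hilbert space H_A with A² = A'² = I, and B, B' self-adjoint on H_B with B² = B'² = I. Then the operator C = A⊗(B+B') + A'⊗(B−B') on H_A ⊗ H_B satisfies ‖C‖ ≤ 2√2. -/
open Kronecker

private lemma kron_sub' {l p q r : Type*} (A : Matrix l p ℂ) (B C : Matrix q r ℂ) :
    A ⊗ₖ (B - C) = A ⊗ₖ B - A ⊗ₖ C := by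
  ext ⟨i,i'⟩ ⟨j,j'⟩
  simp [Matrix.kroneckerMap_apply, mul_sub]

private lemma kron_conjT' {p q : Type*} (A : Matrix p p ℂ) (B : Matrix q q ℂ) :
    (A ⊗ₖ B).conjTranspose = A.conjTranspose ⊗ₖ B.conjTranspose := by
  ext ⟨i,i'⟩ ⟨j,j'⟩
  simp [Matrix.kroneckerMap_apply, Matrix.conjTranspose_apply, mul_comm]

private lemma clm_norm_le_one' {E : Type*} [NormedAddCommGroup E] [InnerProductSpace ℂ E]
    [CompleteSpace E] (x : E →L[ℂ] E) (hs : star x = x) (h1 : x * x = 1) : ‖x‖ ≤ 1 := by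
  have h := CStarRing.norm_star_mul_self (x := x)
  rw [hs, h1] at h
  have h2 : ‖(1 : E →L[ℂ] E)‖ ≤ 1 := ContinuousLinearMap.norm_id_le
  nlinarith [norm_nonneg x]

set_option maxHeartbeats 1000000 in
/-- Tsirelson's bound: for Hermitian A, A', B, B' squaring to the identity, the
    CHSH operator C = A⊗(B+B') + A'⊗(B−B') has operator norm at most 2√2. -/
theorem stmt_8 {m n : ℕ} (A A' : Matrix (Fin m) (Fin m) ℂ) (B B' : Matrix (Fin n) (Fin n) ℂ)
    (hA : A.IsHermitian) (hA' : A'.IsHermitian) (hB : B.IsHermitian) (hB' : B'.IsHermitian)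
    (hA2 : A * A = 1) (hA'2 : A' * A' = 1) (hB2 : B * B = 1) (hB'2 : B' * B' = 1) :
    ‖Matrix.toEuclideanCLM (𝕜 := ℂ) (A ⊗ₖ (B + B') + A' ⊗ₖ (B - B'))‖ ≤ 2 * Real.sqrt 2 := by
  set φ := Matrix.toEuclideanCLM (𝕜 := ℂ) (n := Fin m × Fin n) with hφ
  set M : Matrix (Fin m × Fin n) (Fin m × Fin n) ℂ := A ⊗ₖ (B + B') + A' ⊗ₖ (B - B') with hM
  set p := φ (A ⊗ₖ B) with hp
  set q := φ (A ⊗ₖ B') with hq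
  set r := φ (A' ⊗ₖ B) with hr
  set s := φ (A' ⊗ₖ B') with hs
  have sq : ∀ (X : Matrix (Fin m) (Fin m) ℂ) (Y : Matrix (Fin n) (Fin n) ℂ),
      X * X = 1 → Y * Y = 1 → φ (X ⊗ₖ Y) * φ (X ⊗ₖ Y) = 1 := by
    intro X Y hX hY
    rw [← map_mul, ← Matrix.mul_kronecker_mul, hX, hY, Matrix.one_kronecker_one, map_one]
  have sa : ∀ (X : Matrix (Fin m) (Fin m) ℂ) (Y : Matrix (Fin n) (Fin n) ℂ),
      X.IsHermitian → Y.IsHermitian → star (φ (X ⊗ₖ Y)) = φ (X ⊗ₖ Y) := by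
    intro X Y hX hY
    rw [← map_star, Matrix.star_eq_conjTranspose, kron_conjT', hX.eq, hY.eq]
  have np : ‖p‖ ≤ 1 := clm_norm_le_one' _ (sa _ _ hA hB) (sq _ _ hA2 hB2)
  have nq : ‖q‖ ≤ 1 := clm_norm_le_one' _ (sa _ _ hA hB') (sq _ _ hA2 hB'2)
  have nr : ‖r‖ ≤ 1 := clm_norm_le_one' _ (sa _ _ hA' hB) (sq _ _ hA'2 hB2)
  have ns : ‖s‖ ≤ 1 := clm_norm_le_one' _ (sa _ _ hA' hB') (sq _ _ hA'2 hB'2)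
  have key : M * M =
      (1 + 1 + 1 + 1 : Matrix (Fin m × Fin n) (Fin m × Fin n) ℂ) +
      ((A ⊗ₖ B') * (A' ⊗ₖ B) - (A ⊗ₖ B) * (A' ⊗ₖ B') +
        ((A' ⊗ₖ B) * (A ⊗ₖ B') - (A' ⊗ₖ B') * (A ⊗ₖ B))) := by
    simp only [hM, ← Matrix.mul_kronecker_mul, add_mul, mul_add, sub_mul, mul_sub,
      hA2, hA'2, hB2, hB'2, Matrix.kronecker_add, kron_sub', Matrix.one_kronecker_one]
    abel
  have hcc : φ M * φ M = (1 + 1 + 1 + 1) + (q * r - p * s + (r * q - s * p)) := by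
    rw [← map_mul, key]
    simp only [map_add, map_sub, map_mul, map_one, hp, hq, hr, hs]
  have hMsa : star (φ M) = φ M := by
    rw [← map_star, Matrix.star_eq_conjTranspose]
    congr 1
    rw [hM, Matrix.conjTranspose_add, kron_conjT', kron_conjT', Matrix.conjTranspose_add,
      Matrix.conjTranspose_sub, hA.eq, hA'.eq, hB.eq, hB'.eq]
  have h1 : ‖(1 : EuclideanSpace ℂ (Fin m × Fin n) →L[ℂ] EuclideanSpace ℂ (Fin m × Fin n))‖ ≤ 1 :=
    ContinuousLinearMap.norm_id_le
  have h8 : ‖φ M * φ M‖ ≤ 8 := by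
    rw [hcc]
    have t1 : ‖q * r - p * s + (r * q - s * p)‖ ≤ 4 := by
      calc ‖q * r - p * s + (r * q - s * p)‖
          ≤ ‖q * r - p * s‖ + ‖r * q - s * p‖ := norm_add_le _ _
        _ ≤ (‖q * r‖ + ‖p * s‖) + (‖r * q‖ + ‖s * p‖) := by
            gcongr <;> exact norm_sub_le _ _
        _ ≤ (‖q‖ * ‖r‖ + ‖p‖ * ‖s‖) + (‖r‖ * ‖q‖ + ‖s‖ * ‖p‖) := by
            gcongr <;> exact norm_mul_le _ _
        _ ≤ 4 := by nlinarith [norm_nonneg p, norm_nonneg q, norm_nonneg r, norm_nonneg s]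
    have t2 : ‖(1 + 1 + 1 + 1 :
        EuclideanSpace ℂ (Fin m × Fin n) →L[ℂ] EuclideanSpace ℂ (Fin m × Fin n))‖ ≤ 4 := by
      refine le_trans (norm_add_le _ _) ?_
      refine le_trans (add_le_add_left (norm_add_le _ _) _) ?_
      refine le_trans (add_le_add_left (add_le_add_left (norm_add_le _ _) _) _) ?_
      linarith
    calc ‖(1 + 1 + 1 + 1) + (q * r - p * s + (r * q - s * p))‖
        ≤ ‖(1 + 1 + 1 + 1 :
            EuclideanSpace ℂ (Fin m × Fin n) →L[ℂ] EuclideanSpace ℂ (Fin m × Fin n))‖ +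
          ‖q * r - p * s + (r * q - s * p)‖ := norm_add_le _ _
      _ ≤ 8 := by linarith
  have hsq : ‖φ M‖ * ‖φ M‖ ≤ 8 := by
    have h := CStarRing.norm_star_mul_self (x := φ M)
    rw [hMsa] at h
    rw [← h]; exact h8
  nlinarith [norm_nonneg (φ M), Real.sqrt_nonneg 2, Real.mul_self_sqrt (by norm_num : (0:ℝ) ≤ 2)]
end

section
/- The Tsirelson bound 2√2 is attained: there exist 2×2 self-adjoint matrices A, A', B, B' with A² = A'² = B² = B'² = I and a unit vector ψ in ℂ²⊗ℂ² such that ⟨ψ, (A⊗(B+B') + A'⊗(B−B'))ψ⟩ = 2√2. -/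
open Kronecker

noncomputable def cc : ℂ := ((Real.sqrt 2)⁻¹ : ℝ)

/-- The Tsirelson bound 2√2 is attained: there exist 2×2 Hermitian observables squaring
    to the identity and a unit vector ψ ∈ ℂ²⊗ℂ² achieving ⟨ψ, Cψ⟩ = 2√2. -/
theorem stmt_11 :
    ∃ (A A' B B' : Matrix (Fin 2) (Fin 2) ℂ),
      A.IsHermitian ∧ A'.IsHermitian ∧ B.IsHermitian ∧ B'.IsHermitian ∧
      A * A = 1 ∧ A' * A' = 1 ∧ B * B = 1 ∧ B' * B' = 1 ∧
      ∃ ψ : EuclideanSpace ℂ (Fin 2 × Fin 2), ‖ψ‖ = 1 ∧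
        (inner ℂ ψ ((Matrix.toEuclideanCLM (𝕜 := ℂ)
            (A ⊗ₖ (B + B') + A' ⊗ₖ (B - B'))) ψ) : ℂ)
          = (2 * Real.sqrt 2 : ℝ) := by
  have hr : ((Real.sqrt 2)⁻¹ * (Real.sqrt 2)⁻¹ : ℝ) = 1/2 := by
    rw [← mul_inv, Real.mul_self_sqrt (by norm_num)]; norm_num
  have hc2 : cc * cc = ((1/2 : ℝ) : ℂ) := by
    simp only [cc, ← Complex.ofReal_mul, hr]
  refine ⟨!![1,0;0,-1], !![0,1;1,0], !![cc,cc;cc,-cc], !![cc,-cc;-cc,-cc],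
    ?_, ?_, ?_, ?_, ?_, ?_, ?_, ?_, ?_⟩
  · ext i j; fin_cases i <;> fin_cases j <;> simp [Matrix.conjTranspose_apply]
  · ext i j; fin_cases i <;> fin_cases j <;> simp [Matrix.conjTranspose_apply]
  · ext i j; fin_cases i <;> fin_cases j <;>
      simp [cc, Matrix.conjTranspose_apply, Complex.conj_ofReal]
  · ext i j; fin_cases i <;> fin_cases j <;>
      simp [cc, Matrix.conjTranspose_apply, Complex.conj_ofReal]
  · ext i j; fin_cases i <;> fin_cases j <;>
      simp [Matrix.mul_apply, Fin.sum_univ_two, Matrix.one_apply]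
  · ext i j; fin_cases i <;> fin_cases j <;>
      simp [Matrix.mul_apply, Fin.sum_univ_two, Matrix.one_apply]
  · ext i j; fin_cases i <;> fin_cases j <;>
      simp [Matrix.mul_apply, Fin.sum_univ_two, Matrix.one_apply, hc2] <;> norm_num
  · ext i j; fin_cases i <;> fin_cases j <;>
      simp [Matrix.mul_apply, Fin.sum_univ_two, Matrix.one_apply, hc2] <;> norm_num
  · refine ⟨(WithLp.equiv 2 _).symm (fun p => if p.1 = p.2 then cc else 0), ?_, ?_⟩
    · rw [EuclideanSpace.norm_eq]
      simp [Fintype.sum_prod_type, Fin.sum_univ_two, cc, abs_of_nonneg, Real.sqrt_nonneg, hr]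
      norm_num
    · rw [WithLp.equiv_symm_apply, Matrix.toEuclideanCLM_toLp]
      simp only [PiLp.inner_apply, PiLp.toLp_apply, Matrix.mulVec,
        dotProduct, Fintype.sum_prod_type, Fin.sum_univ_two,
        Matrix.add_apply, Matrix.sub_apply, Matrix.kroneckerMap_apply]
      simp [Matrix.mulVec, dotProduct, Fintype.sum_prod_type, Fin.sum_univ_two]
      have h2 : ((Real.sqrt 2 : ℝ) : ℂ) * ((Real.sqrt 2 : ℝ) : ℂ) = 2 := by
        rw [← Complex.ofReal_mul, Real.mul_self_sqrt] <;> norm_num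
      simp only [cc, Complex.conj_ofReal]
      have hs : ((Real.sqrt 2 : ℝ) : ℂ) ≠ 0 := by
        intro h; rw [h, zero_mul] at h2; norm_num at h2
      have hinv : ((Real.sqrt 2 : ℝ) : ℂ)⁻¹ = ((Real.sqrt 2 : ℝ) : ℂ) / 2 := by
        rw [eq_div_iff two_ne_zero, ← h2, inv_mul_cancel_left₀ hs]
      push_cast
      rw [hinv]
      linear_combination ((Real.sqrt 2 : ℝ) : ℂ) * h2
end

section
/- Manski worst-case bounds: let X ∈ {0,1} and Y ∈ [0,1] be random variables with P(X=1) = p ∈ (0,1). For any pair of random variables (Y(0), Y(1)) with values in [0,1] satisfying Y = Y(X) almost surely (consistency), the average treatment effect ATE = E[Y(1)] − E[Y(0)] satisfies E[Y | X=1]·p − E[Y | X=0]·(1−p) − p ≤ ATE ≤ E[Y | X=1]·p + (1−p) − E[Y | X=0]·(1−p). -/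
open MeasureTheory

/-- Manski worst-case bounds on the average treatment effect:
    E[Y|X=1]·p − E[Y|X=0]·(1−p) − p ≤ E[Y(1)] − E[Y(0)]
      ≤ E[Y|X=1]·p + (1−p) − E[Y|X=0]·(1−p). -/
theorem stmt_15 {Ω : Type*} [MeasurableSpace Ω] (μ : Measure Ω) [IsProbabilityMeasure μ]
    (X Y Y0 Y1 : Ω → ℝ) (hX : Measurable X) (hY : Measurable Y)
    (hY0 : Measurable Y0) (hY1 : Measurable Y1)
    (hXv : ∀ ω, X ω = 0 ∨ X ω = 1)
    (hY0v : ∀ ω, Y0 ω ∈ Set.Icc (0 : ℝ) 1) (hY1v : ∀ ω, Y1 ω ∈ Set.Icc (0 : ℝ) 1)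
    (hcons : ∀ ω, Y ω = if X ω = 1 then Y1 ω else Y0 ω)
    (p : ℝ) (hp : p = (μ {ω | X ω = 1}).toReal) (hp0 : 0 < p) (hp1 : p < 1)
    (E1 E0 : ℝ)
    (hE1 : E1 = (∫ ω in {ω | X ω = 1}, Y ω ∂μ) / p)
    (hE0 : E0 = (∫ ω in {ω | X ω = 0}, Y ω ∂μ) / (1 - p)) :
    E1 * p - E0 * (1 - p) - p ≤ (∫ ω, Y1 ω ∂μ) - ∫ ω, Y0 ω ∂μ ∧
    (∫ ω, Y1 ω ∂μ) - ∫ ω, Y0 ω ∂μ ≤ E1 * p + (1 - p) - E0 * (1 - p) := by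
  set A : Set Ω := {ω | X ω = 1} with hAdef
  have hA : MeasurableSet A := hX (measurableSet_singleton 1)
  have hBc : {ω | X ω = 0} = Aᶜ := by
    ext ω
    simp only [Set.mem_setOf_eq, Set.mem_compl_iff, hAdef]
    rcases hXv ω with h | h <;> simp [h]
  have hμA : (μ A).toReal = p := hp.symm
  have hμAlt : μ A < ⊤ := lt_of_le_of_lt (prob_le_one) (by norm_num)
  have hμAc : (μ Aᶜ).toReal = 1 - p := by
    rw [measure_compl hA (ne_of_lt hμAlt), measure_univ,
      ENNReal.toReal_sub_of_le (prob_le_one) (by norm_num)]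
    simp [hμA]
  -- integrability
  have hint1 : Integrable Y1 μ := by
    apply Integrable.mono' (integrable_const (1 : ℝ)) hY1.aestronglyMeasurable
    filter_upwards with ω
    rw [Real.norm_eq_abs, abs_le]
    exact ⟨le_trans (by norm_num) (hY1v ω).1, (hY1v ω).2⟩
  have hint0 : Integrable Y0 μ := by
    apply Integrable.mono' (integrable_const (1 : ℝ)) hY0.aestronglyMeasurable
    filter_upwards with ω
    rw [Real.norm_eq_abs, abs_le]
    exact ⟨le_trans (by norm_num) (hY0v ω).1, (hY0v ω).2⟩
  -- splits
  have hsplit1 : (∫ ω, Y1 ω ∂μ) = (∫ ω in A, Y1 ω ∂μ) + ∫ ω in Aᶜ, Y1 ω ∂μ :=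
    (integral_add_compl hA hint1).symm
  have hsplit0 : (∫ ω, Y0 ω ∂μ) = (∫ ω in A, Y0 ω ∂μ) + ∫ ω in Aᶜ, Y0 ω ∂μ :=
    (integral_add_compl hA hint0).symm
  -- consistency on sets
  have hYA : (∫ ω in A, Y ω ∂μ) = ∫ ω in A, Y1 ω ∂μ := by
    apply setIntegral_congr_fun hA
    intro ω hω
    simp [hcons ω, hω.out]
  have hYAc : (∫ ω in Aᶜ, Y ω ∂μ) = ∫ ω in Aᶜ, Y0 ω ∂μ := by
    apply setIntegral_congr_fun hA.compl
    intro ω hω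
    have : X ω ≠ 1 := hω
    simp [hcons ω, this]
  have hE1p : E1 * p = ∫ ω in A, Y1 ω ∂μ := by
    rw [hE1, div_mul_cancel₀ _ (ne_of_gt hp0), hYA]
  have hE0p : E0 * (1 - p) = ∫ ω in Aᶜ, Y0 ω ∂μ := by
    rw [hE0, hBc, div_mul_cancel₀ _ (by linarith), hYAc]
  -- bounds on the unobserved pieces
  have h1lo : 0 ≤ ∫ ω in Aᶜ, Y1 ω ∂μ :=
    setIntegral_nonneg hA.compl fun ω _ => (hY1v ω).1
  have h1hi : (∫ ω in Aᶜ, Y1 ω ∂μ) ≤ 1 - p := by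
    calc (∫ ω in Aᶜ, Y1 ω ∂μ) ≤ ∫ _ω in Aᶜ, (1 : ℝ) ∂μ := by
          apply setIntegral_mono_on hint1.integrableOn (integrable_const 1).integrableOn hA.compl
          intro ω _; exact (hY1v ω).2
      _ = (μ Aᶜ).toReal := by simp; rfl
      _ = 1 - p := hμAc
  have h0lo : 0 ≤ ∫ ω in A, Y0 ω ∂μ :=
    setIntegral_nonneg hA fun ω _ => (hY0v ω).1
  have h0hi : (∫ ω in A, Y0 ω ∂μ) ≤ p := by
    calc (∫ ω in A, Y0 ω ∂μ) ≤ ∫ _ω in A, (1 : ℝ) ∂μ := by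
          apply setIntegral_mono_on hint0.integrableOn (integrable_const 1).integrableOn hA
          intro ω _; exact (hY0v ω).2
      _ = (μ A).toReal := by simp; rfl
      _ = p := hμA
  constructor <;> rw [hsplit1, hsplit0, hE1p, hE0p] <;> linarith
end

section
/- Pearl's instrumental inequality for binary variables: if P(x, y | z) = Σ_u P(u)·P(x | z, u)·P(y | x, u) for finite variables X, Y ∈ {0,1}, Z ∈ {0,1}, and latent U (i.e., the IV factorization holds with Z ⊥ U), then for each x ∈ {0,1}: Σ_y max_z P(Y=y, X=x | Z=z) ≤ 1. -/
/-- Pearl's instrumental inequality for binary X, Y, Z: if the observed conditional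
    distribution P(x,y|z) = Σ_u P(u)·P(x|z,u)·P(y|x,u) arises from the IV factorization
    with latent confounder U, then for each x, Σ_y max_z P(Y=y, X=x | Z=z) ≤ 1. -/
theorem stmt_18 {U : Type*} [Fintype U] (pu : U → ℝ)
    (hpu : ∀ u, 0 ≤ pu u) (hpusum : ∑ u, pu u = 1)
    (f : Bool → U → Bool → ℝ)          -- f z u x = P(X = x | Z = z, U = u)
    (hf : ∀ z u x, 0 ≤ f z u x) (hfsum : ∀ z u, ∑ x, f z u x = 1)
    (g : Bool → U → Bool → ℝ)          -- g x u y = P(Y = y | X = x, U = u)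
    (hg : ∀ x u y, 0 ≤ g x u y) (hgsum : ∀ x u, ∑ y, g x u y = 1)
    (Pobs : Bool → Bool → Bool → ℝ)    -- Pobs z x y = P(X = x, Y = y | Z = z)
    (hPobs : ∀ z x y, Pobs z x y = ∑ u, pu u * f z u x * g x u y) :
    ∀ x : Bool,
      max (Pobs false x false) (Pobs true x false)
        + max (Pobs false x true) (Pobs true x true) ≤ 1 := by
  intro x
  set M : U → ℝ := fun u => max (f false u x) (f true u x) with hM
  have hMle : ∀ u, M u ≤ 1 := by
    intro u
    have h1 : ∀ z : Bool, f z u x ≤ 1 := by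
      intro z
      have := hfsum z u
      rw [Fintype.sum_bool] at this
      cases x <;> nlinarith [hf z u true, hf z u false]
    exact max_le (h1 false) (h1 true)
  have key : ∀ y : Bool, max (Pobs false x y) (Pobs true x y)
      ≤ ∑ u, pu u * M u * g x u y := by
    intro y
    have hz : ∀ z : Bool, Pobs z x y ≤ ∑ u, pu u * M u * g x u y := by
      intro z
      rw [hPobs]
      apply Finset.sum_le_sum
      intro u _
      have hfM : f z u x ≤ M u := by cases z <;> simp [hM]
      have h1 := hpu u
      have h2 := hg x u y
      have : pu u * f z u x ≤ pu u * M u := mul_le_mul_of_nonneg_left hfM h1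
      exact mul_le_mul_of_nonneg_right this h2
    exact max_le (hz false) (hz true)
  have hsum : ∑ u, pu u * M u * g x u false + ∑ u, pu u * M u * g x u true ≤ 1 := by
    rw [← Finset.sum_add_distrib]
    calc ∑ u, (pu u * M u * g x u false + pu u * M u * g x u true)
        = ∑ u, pu u * M u := by
          apply Finset.sum_congr rfl
          intro u _
          have := hgsum x u
          rw [Fintype.sum_bool] at this
          linear_combination pu u * M u * this
      _ ≤ ∑ u, pu u := by
          apply Finset.sum_le_sum
          intro u _
          have hM0 : 0 ≤ M u := le_max_of_le_left (hf false u x)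
          nlinarith [hMle u, hpu u]
      _ = 1 := hpusum
  linarith [key false, key true]
end
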